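/- arXiv:1511.07759 — 6 statements merged into one kernel-verified Lean document; each statement's English description precedes it below -/
import Mathlib

section
/- Let m ≥ 2 and n ≥ 2 be integers, and let g_i : ℝ^n → ℝ for i ∈ [n] be polynomials with nonnegative coefficients. If there exist positive vectors y, z ∈ ℝ^n with y ≤ z (componentwise), g_i(y) ≥ y_i^{m-1} and g_i(z) ≤ z_i^{m-1} for all i, then there exists w with y ≤ w ≤ z such that g_i(w) = w_i^{m-1} for all i ∈ [n]. -/
lemma eval_mono_of_nonneg_coeff {n : ℕ} (p : MvPolynomial (Fin n) ℝ)
    (hp : ∀ d, 0 ≤ p.coeff d) {x x' : Fin n → ℝ} (hx : ∀ i, 0 ≤ x i)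
    (h : ∀ i, x i ≤ x' i) :
    MvPolynomial.eval x p ≤ MvPolynomial.eval x' p := by
  rw [MvPolynomial.eval_eq, MvPolynomial.eval_eq]
  apply Finset.sum_le_sum
  intro d _
  apply mul_le_mul_of_nonneg_left _ (hp d)
  apply Finset.prod_le_prod
  · intro i _; exact pow_nonneg (hx i) _
  · intro i _; exact pow_le_pow_left₀ (hx i) (h i) _

/-- fixed-point existence between a sub- and super-solution. -/
theorem polynomial_fixed_point_exists (m n : ℕ) (hm : 2 ≤ m) (hn : 2 ≤ n)
    (g : Fin n → MvPolynomial (Fin n) ℝ)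
    (hg : ∀ i d, 0 ≤ (g i).coeff d)
    (y z : Fin n → ℝ) (hy : ∀ i, 0 < y i) (hz : ∀ i, 0 < z i)
    (hyz : ∀ i, y i ≤ z i)
    (hgy : ∀ i, y i ^ (m - 1) ≤ MvPolynomial.eval y (g i))
    (hgz : ∀ i, MvPolynomial.eval z (g i) ≤ z i ^ (m - 1)) :
    ∃ w : Fin n → ℝ, (∀ i, y i ≤ w i ∧ w i ≤ z i) ∧
      ∀ i, MvPolynomial.eval w (g i) = w i ^ (m - 1) := by
  set k := m - 1 with hk
  have hk0 : k ≠ 0 := by omega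
  have hyz' : (y : Fin n → ℝ) ≤ z := fun i => hyz i
  haveI : Fact ((y : Fin n → ℝ) ≤ z) := ⟨hyz'⟩
  -- bounds on eval for x ∈ Icc y z
  have hxnn : ∀ x : Fin n → ℝ, x ∈ Set.Icc y z → ∀ i, 0 ≤ x i := by
    intro x hx i; exact le_trans (hy i).le (hx.1 i)
  have hlo : ∀ x ∈ Set.Icc y z, ∀ i, y i ^ k ≤ MvPolynomial.eval x (g i) := by
    intro x hx i
    exact le_trans (hgy i)
      (eval_mono_of_nonneg_coeff (g i) (hg i) (fun j => (hy j).le) (fun j => hx.1 j))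
  have hhi : ∀ x ∈ Set.Icc y z, ∀ i, MvPolynomial.eval x (g i) ≤ z i ^ k := by
    intro x hx i
    exact le_trans
      (eval_mono_of_nonneg_coeff (g i) (hg i) (hxnn x hx) (fun j => hx.2 j)) (hgz i)
  have hevnn : ∀ x ∈ Set.Icc y z, ∀ i, 0 ≤ MvPolynomial.eval x (g i) := by
    intro x hx i
    exact le_trans (pow_nonneg (hy i).le k) (hlo x hx i)
  -- the map
  set f : (Fin n → ℝ) → (Fin n → ℝ) :=
    fun x i => (MvPolynomial.eval x (g i)) ^ ((k : ℝ)⁻¹) with hf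
  have hmaps : ∀ x ∈ Set.Icc y z, f x ∈ Set.Icc y z := by
    intro x hx
    constructor <;> intro i
    · calc y i = (y i ^ k) ^ ((k : ℝ)⁻¹) :=
            (Real.pow_rpow_inv_natCast (hy i).le hk0).symm
        _ ≤ _ := Real.rpow_le_rpow (pow_nonneg (hy i).le k) (hlo x hx i)
            (by positivity)
    · calc f x i ≤ (z i ^ k) ^ ((k : ℝ)⁻¹) :=
            Real.rpow_le_rpow (hevnn x hx i) (hhi x hx i) (by positivity)
        _ = z i := Real.pow_rpow_inv_natCast (hz i).le hk0
  have hmono : ∀ x ∈ Set.Icc y z, ∀ x' ∈ Set.Icc y z,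
      x ≤ x' → f x ≤ f x' := by
    intro x hx x' hx' hle i
    exact Real.rpow_le_rpow (hevnn x hx i)
      (eval_mono_of_nonneg_coeff (g i) (hg i) (hxnn x hx) (fun j => hle j))
      (by positivity)
  let F : Set.Icc (y : Fin n → ℝ) z →o Set.Icc (y : Fin n → ℝ) z :=
    ⟨fun x => ⟨f x.1, hmaps x.1 x.2⟩,
     fun a b hab => hmono a.1 a.2 b.1 b.2 hab⟩
  obtain ⟨w, hw⟩ : ∃ w : Set.Icc (y : Fin n → ℝ) z, F w = w :=
    ⟨OrderHom.lfp F, OrderHom.map_lfp F⟩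
  refine ⟨w.1, fun i => ⟨w.2.1 i, w.2.2 i⟩, fun i => ?_⟩
  have hfi : f w.1 i = w.1 i := congrFun (congrArg Subtype.val hw) i
  have := congrArg (fun t : ℝ => t ^ k) hfi
  simpa [hf, Real.rpow_inv_natCast_pow (hevnn w.1 w.2 i) hk0] using this
end

section
/- If A is a nonnegative tensor of order m and dimension n that has a positive eigenvector x (i.e., A x^{m-1} = λ x^{[m-1]} with x > 0), then λ = ρ(A), and A is either the zero tensor or strictly nonnegative. -/
/-! Compare an arbitrary eigenpair `(μ, y)` with the positive eigenvector `x`: scale `x` by the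
least `t` with `‖y‖ ≤ t x` componentwise, which is attained at some coordinate `i₀`. The triangle
inequality and monotonicity of `x ↦ A x^{m-1}` on nonnegative vectors give
`‖μ‖ (t x_{i₀})^{m-1} ≤ (A (t x)^{m-1})_{i₀} = λ (t x_{i₀})^{m-1}`, so `‖μ‖ ≤ λ`, while `λ` itself is
an eigenvalue. For the dichotomy, `(A x^{m-1})_i > 0` for one (equivalently every) positive `x`
exactly when row `i` of `A` has a positive entry. -/

open Finset

noncomputable section

/-- `(A x^{m-1})_i` for a tensor of order `m'+1` and dimension `n`. -/
def tApply {n m' : ℕ} (A : Fin n → (Fin m' → Fin n) → ℝ) (x : Fin n → ℝ) (i : Fin n) : ℝ :=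
  ∑ idx : Fin m' → Fin n, A i idx * ∏ k, x (idx k)

/-- Complex version of `tApply`. -/
def tApplyC {n m' : ℕ} (A : Fin n → (Fin m' → Fin n) → ℝ) (x : Fin n → ℂ) (i : Fin n) : ℂ :=
  ∑ idx : Fin m' → Fin n, (A i idx : ℂ) * ∏ k, x (idx k)

/-- `lam` is an eigenvalue of the tensor `A`. -/
def IsEig {n m' : ℕ} (A : Fin n → (Fin m' → Fin n) → ℝ) (lam : ℂ) : Prop :=
  ∃ x : Fin n → ℂ, x ≠ 0 ∧ ∀ i, tApplyC A x i = lam * x i ^ m'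

/-- The spectral radius of a tensor. -/
def specRad {n m' : ℕ} (A : Fin n → (Fin m' → Fin n) → ℝ) : ℝ :=
  sSup {r | ∃ lam, IsEig A lam ∧ r = ‖lam‖}

/-- The majorization matrix `M_A` of a tensor `A`. -/
def major {n m' : ℕ} (A : Fin n → (Fin m' → Fin n) → ℝ) (i j : Fin n) : ℝ :=
  ∑ idx ∈ univ.filter (fun idx : Fin m' → Fin n => ∃ k, idx k = j), A i idx

/-- The majorization matrix of the principal sub-tensor `A_I`. -/
def subMajor {n m' : ℕ} (A : Fin n → (Fin m' → Fin n) → ℝ) (I : Finset (Fin n))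
    (i j : Fin n) : ℝ :=
  ∑ idx ∈ univ.filter (fun idx : Fin m' → Fin n => (∃ k, idx k = j) ∧ ∀ k, idx k ∈ I),
    A i idx

/-- Irreducibility of (the principal submatrix on `I` of) a nonnegative matrix. -/
def MatIrredOn {n : ℕ} (M : Fin n → Fin n → ℝ) (I : Finset (Fin n)) : Prop :=
  ∀ S ⊆ I, S.Nonempty → S ≠ I → ∃ i ∈ S, ∃ j ∈ I \ S, M i j ≠ 0

/-- A tensor is weakly irreducible if its majorization matrix is irreducible. -/
def WeaklyIrred {n m' : ℕ} (A : Fin n → (Fin m' → Fin n) → ℝ) : Prop :=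
  MatIrredOn (major A) Finset.univ

/-- Weak irreducibility of the principal sub-tensor `A_I`. -/
def WeaklyIrredOn {n m' : ℕ} (A : Fin n → (Fin m' → Fin n) → ℝ) (I : Finset (Fin n)) : Prop :=
  MatIrredOn (subMajor A I) I

/-- `(A_I e_I^{m-1})_i`, the action of the principal sub-tensor on the all-ones vector. -/
def subApplyOnes {n m' : ℕ} (A : Fin n → (Fin m' → Fin n) → ℝ) (I : Finset (Fin n))
    (i : Fin n) : ℝ :=
  ∑ idx ∈ univ.filter (fun idx : Fin m' → Fin n => ∀ k, idx k ∈ I), A i idx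

/-- The spectral radius of the principal sub-tensor `A_I`. -/
def subSpecRad {n m' : ℕ} (A : Fin n → (Fin m' → Fin n) → ℝ) (I : Finset (Fin n)) : ℝ :=
  sSup {r | ∃ lam : ℂ, ∃ x : Fin n → ℂ, (∃ i ∈ I, x i ≠ 0) ∧
    (∀ i ∈ I, (∑ idx ∈ univ.filter (fun idx : Fin m' → Fin n => ∀ k, idx k ∈ I),
      (A i idx : ℂ) * ∏ k, x (idx k)) = lam * x i ^ m') ∧ r = ‖lam‖}

section TensorApply

variable {n m' : ℕ} {A : Fin n → (Fin m' → Fin n) → ℝ}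

theorem tApplyC_ofReal (x : Fin n → ℝ) (i : Fin n) :
    tApplyC A (fun j => (x j : ℂ)) i = tApply A x i := by
  simp [tApplyC, tApply]

theorem tApply_smul (t : ℝ) (x : Fin n → ℝ) (i : Fin n) :
    tApply A (t • x) i = t ^ m' * tApply A x i := by
  simp only [tApply, Pi.smul_apply, smul_eq_mul, prod_mul_distrib, prod_const, card_univ,
    Fintype.card_fin, mul_sum]
  exact sum_congr rfl fun _ _ => by ring

theorem tApply_nonneg (hA : ∀ i idx, 0 ≤ A i idx) {x : Fin n → ℝ} (hx : 0 ≤ x) (i : Fin n) :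
    0 ≤ tApply A x i :=
  sum_nonneg fun idx _ => mul_nonneg (hA i idx) (prod_nonneg fun k _ => hx (idx k))

theorem tApply_mono (hA : ∀ i idx, 0 ≤ A i idx) {x y : Fin n → ℝ} (hx : 0 ≤ x) (hxy : x ≤ y)
    (i : Fin n) : tApply A x i ≤ tApply A y i :=
  sum_le_sum fun idx _ => mul_le_mul_of_nonneg_left
    (prod_le_prod (fun k _ => hx (idx k)) fun k _ => hxy (idx k)) (hA i idx)

theorem norm_tApplyC_le (hA : ∀ i idx, 0 ≤ A i idx) (y : Fin n → ℂ) (i : Fin n) :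
    ‖tApplyC A y i‖ ≤ tApply A (fun j => ‖y j‖) i := by
  refine (norm_sum_le _ _).trans (sum_le_sum fun idx _ => ?_)
  rw [norm_mul, norm_prod, Complex.norm_real, Real.norm_of_nonneg (hA i idx)]

theorem tApply_pos_iff (hA : ∀ i idx, 0 ≤ A i idx) {x : Fin n → ℝ} (hx : ∀ j, 0 < x j)
    (i : Fin n) : 0 < tApply A x i ↔ ∃ idx, 0 < A i idx := by
  rw [tApply, sum_pos_iff_of_nonneg fun idx _ =>
    mul_nonneg (hA i idx) (prod_nonneg fun k _ => (hx (idx k)).le)]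
  simp only [mem_univ, true_and, mul_pos_iff_of_pos_right (prod_pos fun k _ => hx _)]

theorem isEig_ofReal {x : Fin n → ℝ} (hx : x ≠ 0) {lam : ℝ}
    (heig : ∀ i, tApply A x i = lam * x i ^ m') : IsEig A lam :=
  ⟨fun j => (x j : ℂ), fun h => hx (funext fun j => Complex.ofReal_eq_zero.mp (congrFun h j)),
    fun i => by rw [tApplyC_ofReal, heig]; push_cast; rfl⟩

theorem eigenvalue_nonneg_of_pos_eigenvector [Nonempty (Fin n)] (hA : ∀ i idx, 0 ≤ A i idx)
    {lam : ℝ} {x : Fin n → ℝ} (hx : ∀ j, 0 < x j) (heig : ∀ i, tApply A x i = lam * x i ^ m') :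
    0 ≤ lam := by
  obtain ⟨i⟩ := ‹Nonempty (Fin n)›
  have h := tApply_nonneg hA (fun j => (hx j).le) i
  rw [heig] at h
  exact nonneg_of_mul_nonneg_left h (pow_pos (hx i) m')

theorem norm_le_of_pos_eigenvector (hA : ∀ i idx, 0 ≤ A i idx) {lam : ℝ} {x : Fin n → ℝ}
    (hx : ∀ j, 0 < x j) (heig : ∀ i, tApply A x i = lam * x i ^ m') {mu : ℂ}
    (hmu : IsEig A mu) : ‖mu‖ ≤ lam := by
  obtain ⟨y, hy0, hy⟩ := hmu
  obtain ⟨j, hj⟩ := Function.ne_iff.mp hy0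
  have : Nonempty (Fin n) := ⟨j⟩
  obtain ⟨i₀, hi₀⟩ := Finite.exists_max fun i => ‖y i‖ / x i
  set t := ‖y i₀‖ / x i₀
  have hbound : (fun i => ‖y i‖) ≤ t • x := fun i => (div_le_iff₀ (hx i)).mp (hi₀ i)
  have hyi₀ : t * x i₀ = ‖y i₀‖ := div_mul_cancel₀ _ (hx i₀).ne'
  have ht : 0 < t := (div_pos (norm_pos_iff.mpr hj) (hx j)).trans_le (hi₀ j)
  have hpos : 0 < ‖y i₀‖ ^ m' := pow_pos (hyi₀ ▸ mul_pos ht (hx i₀)) m'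
  refine le_of_mul_le_mul_right ?_ hpos
  calc ‖mu‖ * ‖y i₀‖ ^ m' = ‖tApplyC A y i₀‖ := by rw [hy, norm_mul, norm_pow]
    _ ≤ tApply A (fun j => ‖y j‖) i₀ := norm_tApplyC_le hA y i₀
    _ ≤ tApply A (t • x) i₀ := tApply_mono hA (fun _ => norm_nonneg _) hbound i₀
    _ = lam * ‖y i₀‖ ^ m' := by rw [tApply_smul, heig, ← hyi₀]; ring

theorem specRad_eq_of_pos_eigenvector [Nonempty (Fin n)] (hA : ∀ i idx, 0 ≤ A i idx)
    {lam : ℝ} {x : Fin n → ℝ} (hx : ∀ j, 0 < x j) (heig : ∀ i, tApply A x i = lam * x i ^ m') :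
    specRad A = lam := by
  obtain ⟨i⟩ := ‹Nonempty (Fin n)›
  have hlam : IsEig A lam := isEig_ofReal (fun h => (hx i).ne' (congrFun h i)) heig
  refine IsGreatest.csSup_eq ⟨⟨lam, hlam, ?_⟩, ?_⟩
  · rw [Complex.norm_real, Real.norm_of_nonneg (eigenvalue_nonneg_of_pos_eigenvector hA hx heig)]
  · rintro _ ⟨mu, hmu, rfl⟩
    exact norm_le_of_pos_eigenvector hA hx heig hmu

theorem eq_zero_or_tApply_one_pos (hA : ∀ i idx, 0 ≤ A i idx) {lam : ℝ} {x : Fin n → ℝ}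
    (hx : ∀ j, 0 < x j) (heig : ∀ i, tApply A x i = lam * x i ^ m') (hlam : 0 ≤ lam) :
    A = 0 ∨ ∀ i, 0 < tApply A (fun _ => (1 : ℝ)) i := by
  rcases hlam.eq_or_lt with rfl | hlam
  · left
    ext i idx
    have h : ¬ 0 < tApply A x i := by simp [heig]
    rw [tApply_pos_iff hA hx] at h
    push Not at h
    exact le_antisymm (h idx) (hA i idx)
  · right
    intro i
    rw [tApply_pos_iff hA fun _ => one_pos, ← tApply_pos_iff hA hx, heig]
    exact mul_pos hlam (pow_pos (hx i) m')

end TensorApply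

theorem positive_eigenvector_is_perron_general {n m' : ℕ} (hn : 1 ≤ n)
    (A : Fin n → (Fin m' → Fin n) → ℝ)
    (hA : ∀ i idx, 0 ≤ A i idx)
    (lam : ℝ) (x : Fin n → ℝ) (hx : ∀ i, 0 < x i)
    (heig : ∀ i, tApply A x i = lam * x i ^ m') :
    lam = specRad A ∧
      (A = 0 ∨ ∀ i, 0 < tApply A (fun _ => (1 : ℝ)) i) := by
  have : Nonempty (Fin n) := ⟨⟨0, hn⟩⟩
  exact ⟨(specRad_eq_of_pos_eigenvector hA hx heig).symm,
    eq_zero_or_tApply_one_pos hA hx heig (eigenvalue_nonneg_of_pos_eigenvector hA hx heig)⟩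

/-- a positive eigenvector is a Perron vector; the tensor is zero or
strictly nonnegative. -/
theorem positive_eigenvector_is_perron {n m' : ℕ} (hm : 1 ≤ m') (hn : 1 ≤ n)
    (A : Fin n → (Fin m' → Fin n) → ℝ)
    (hA : ∀ i idx, 0 ≤ A i idx)
    (lam : ℝ) (x : Fin n → ℝ) (hx : ∀ i, 0 < x i)
    (heig : ∀ i, tApply A x i = lam * x i ^ m') :
    lam = specRad A ∧
      (A = 0 ∨ ∀ i, 0 < tApply A (fun _ => (1 : ℝ)) i) :=
  positive_eigenvector_is_perron_general hn A hA lam x hx heig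

end
end

section
/- If A is a weakly irreducible nonnegative tensor of order m and dimension n with ρ(A) > 0, then A is strictly nonnegative. -/
open Finset

noncomputable section

/-! A zero row `i` of `A` gives a zero row `i` of `M_A`, so irreducibility leaves `i` as the only
index. Then every eigen-equation at `i` reads `0 = λ x_i^{m-1}` with `x_i ≠ 0`, so `ρ(A) = 0`. -/

section ZeroRow

variable {n m' : ℕ} (A : Fin n → (Fin m' → Fin n) → ℝ)

lemma tApply_one (i : Fin n) : tApply A (fun _ => 1) i = ∑ idx, A i idx := by
  simp [tApply]

lemma major_eq_zero_of_row_eq_zero {i : Fin n} (hrow : ∀ idx, A i idx = 0) (j : Fin n) :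
    major A i j = 0 :=
  sum_eq_zero fun idx _ => hrow idx

lemma WeaklyIrred.eq_of_row_eq_zero (hirr : WeaklyIrred A) {i : Fin n}
    (hrow : ∀ idx, A i idx = 0) (j : Fin n) : j = i := by
  by_contra hji
  have hne : ({i} : Finset (Fin n)) ≠ univ := fun hi => hji (mem_singleton.mp (hi ▸ mem_univ j))
  obtain ⟨i', hi', k, -, hmajor⟩ := hirr {i} (subset_univ _) (singleton_nonempty i) hne
  rw [mem_singleton.mp hi'] at hmajor
  exact hmajor (major_eq_zero_of_row_eq_zero A hrow k)

lemma IsEig.eq_zero_of_row_eq_zero {i : Fin n} (hunique : ∀ j, j = i)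
    (hrow : ∀ idx, A i idx = 0) {lam : ℂ} (hlam : IsEig A lam) : lam = 0 := by
  obtain ⟨x, hx, heig⟩ := hlam
  have hxi : x i ≠ 0 := by
    obtain ⟨j, hj⟩ := Function.ne_iff.mp hx
    rwa [hunique j] at hj
  have hzero : lam * x i ^ m' = 0 := by
    rw [← heig i]
    simp [tApplyC, hrow]
  exact (mul_eq_zero.mp hzero).resolve_right (pow_ne_zero _ hxi)

lemma specRad_nonpos_of_forall_isEig (h : ∀ lam, IsEig A lam → lam = 0) : specRad A ≤ 0 :=
  Real.sSup_nonpos fun _ ⟨lam, hlam, hr⟩ => by simp [hr, h lam hlam]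

end ZeroRow

theorem weakly_irreducible_strictly_nonneg_general {n m' : ℕ}
    (A : Fin n → (Fin m' → Fin n) → ℝ)
    (hA : ∀ i idx, 0 ≤ A i idx)
    (hirr : WeaklyIrred A)
    (hrho : 0 < specRad A) :
    ∀ i, 0 < tApply A (fun _ => (1 : ℝ)) i := by
  intro i
  rw [tApply_one]
  refine (sum_nonneg fun idx _ => hA i idx).lt_of_ne fun hsum => hrho.not_ge ?_
  have hrow : ∀ idx, A i idx = 0 :=
    congrFun ((Fintype.sum_eq_zero_iff_of_nonneg (hA i)).mp hsum.symm)
  exact specRad_nonpos_of_forall_isEig A fun _ =>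
    IsEig.eq_zero_of_row_eq_zero A (hirr.eq_of_row_eq_zero A hrow) hrow

/-- weakly irreducible with positive spectral radius implies strictly nonnegative. -/
theorem weakly_irreducible_strictly_nonneg {n m' : ℕ} (hm : 1 ≤ m') (hn : 1 ≤ n)
    (A : Fin n → (Fin m' → Fin n) → ℝ)
    (hA : ∀ i idx, 0 ≤ A i idx)
    (hirr : WeaklyIrred A)
    (hrho : 0 < specRad A) :
    ∀ i, 0 < tApply A (fun _ => (1 : ℝ)) i :=
  weakly_irreducible_strictly_nonneg_general A hA hirr hrho
end
end

section
/- Let A be a nonnegative n×n matrix with an upper triangular block partition into irreducible diagonal blocks A_1,…,A_r, where for each i ∈ [s] at least one off-diagonal block A_{ij} (j > i) is nonzero and for each i ∈ {s+1,…,r} all off-diagonal blocks in row i are zero. Then A has a positive eigenvector (necessarily for the eigenvalue ρ(A)) if and only if ρ(A_i) < ρ(A) for all i ∈ [s] and ρ(A_i) = ρ(A) for all i ∈ {s+1,…,r}. -/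
/-!
Each diagonal block `A_i` is irreducible, so it has a positive Perron vector (found by minimising
`μ` subject to `A_i x ≤ μ x` over the simplex) whose eigenvalue dominates all complex eigenvalues
and is therefore `ρ(A_i)`.

A positive eigenvector `x` of `A` restricts to an eigenvector of every block whose rows vanish
outside it, and to a subsolution with nonzero defect of every block linked to a later one, which
forces a strictly smaller Perron root. Conversely a positive eigenvector is assembled from the
last block upwards: an isolated block receives its Perron vector, while on a linked block the
part already built supplies a nonzero right-hand side `c ≥ 0`, and `(ρ - A_i) w = c` has a
positive solution because `ρ(A_i) < ρ`: above a positive supersolution, `t - A_i` is invertible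
with a positivity-improving inverse.
-/

open Finset

noncomputable section

/-- The spectral radius of the principal submatrix of `M` on the index set `I`. -/
def matSpecRadOn {n : ℕ} (M : Matrix (Fin n) (Fin n) ℝ) (I : Finset (Fin n)) : ℝ :=
  sSup {r | ∃ mu : ℂ, ∃ v : Fin n → ℂ, (∃ i ∈ I, v i ≠ 0) ∧
    (∀ i ∈ I, (∑ j ∈ I, (M i j : ℂ) * v j) = mu * v i) ∧ r = ‖mu‖}

namespace Matrix

variable {ι : Type*}

lemma toSquareBlockProp_mem_mulVec_apply (N : Matrix ι ι ℝ) (J : Finset ι) (x : ι → ℝ) (i : J) :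
    (N.toSquareBlockProp (· ∈ J) *ᵥ fun j : J => x j) i = ∑ j ∈ J, N i j * x j :=
  sum_coe_sort J fun j => N i j * x j

variable [Fintype ι]

/-- Irreducibility in cut form. Unlike `Matrix.IsIrreducible`, this admits the `1 × 1` zero
matrix, as the block decomposition requires. -/
def IsIndecomposable (N : Matrix ι ι ℝ) : Prop :=
  ∀ S : Finset ι, S.Nonempty → S ≠ univ → ∃ i ∈ S, ∃ j ∉ S, N i j ≠ 0

variable {N : Matrix ι ι ℝ}

lemma mulVec_nonneg_of_nonneg (hN : ∀ i j, 0 ≤ N i j) {x : ι → ℝ} (hx : 0 ≤ x) :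
    0 ≤ N *ᵥ x :=
  fun i => sum_nonneg fun j _ => mul_nonneg (hN i j) (hx j)

lemma mul_le_mulVec_apply (hN : ∀ i j, 0 ≤ N i j) {x : ι → ℝ} (hx : 0 ≤ x) (i j : ι) :
    N i j * x j ≤ (N *ᵥ x) i :=
  single_le_sum (f := fun k => N i k * x k) (fun k _ => mul_nonneg (hN i k) (hx k)) (mem_univ j)

lemma nonneg_of_pos_of_mulVec_le [Nonempty ι] (hN : ∀ i j, 0 ≤ N i j) {x : ι → ℝ} {μ : ℝ}
    (hx : ∀ i, 0 < x i) (hle : N *ᵥ x ≤ μ • x) : 0 ≤ μ := by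
  obtain ⟨i⟩ := ‹Nonempty ι›
  have h := (mulVec_nonneg_of_nonneg hN (fun j => (hx j).le) i).trans (hle i)
  exact nonneg_of_mul_nonneg_left h (hx i)

/-- The zero set of a nonnegative subsolution admits no edge leaving it. -/
theorem IsIndecomposable.pos_of_mulVec_le (hirr : N.IsIndecomposable) (hN : ∀ i j, 0 ≤ N i j)
    {z : ι → ℝ} {μ : ℝ} (hz : 0 ≤ z) (hz0 : z ≠ 0) (hle : N *ᵥ z ≤ μ • z) (i : ι) :
    0 < z i := by
  classical
  by_contra hi
  have hzi : z i = 0 := (not_lt.mp hi).antisymm (hz i)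
  obtain ⟨p, hp, q, hq, hpq⟩ := hirr (univ.filter (z · = 0)) ⟨i, by simpa using hzi⟩ <| by
    refine fun h => hz0 (funext fun j => ?_)
    simpa using h.ge (mem_univ j)
  simp only [mem_filter, mem_univ, true_and] at hp hq
  have hpos : 0 < N p q * z q := mul_pos ((hN p q).lt_of_ne' hpq) ((hz q).lt_of_ne' hq)
  have := hpos.trans_le ((mul_le_mulVec_apply hN hz p q).trans (hle p))
  simp [hp] at this

/-- Minimum principle: adding to `w` the least multiple `s y` that makes it nonnegative creates a
zero at which `N (w + s y) < 0`. -/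
theorem nonneg_of_mulVec_le (hN : ∀ i j, 0 ≤ N i j) {y : ι → ℝ} {l t : ℝ} (hy : ∀ i, 0 < y i)
    (hNy : N *ᵥ y ≤ l • y) (hlt : l < t) {w : ι → ℝ} (hw : N *ᵥ w ≤ t • w) : 0 ≤ w := by
  by_contra hneg
  obtain ⟨i, hi⟩ : ∃ i, w i < 0 := by simpa [Pi.le_def] using hneg
  have : Nonempty ι := ⟨i⟩
  obtain ⟨i₀, hi₀⟩ := Finite.exists_max fun i => -w i / y i
  set s := -w i₀ / y i₀
  have hs : 0 < s := (div_pos (neg_pos.2 hi) (hy i)).trans_le (hi₀ i)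
  have hu : 0 ≤ w + s • y := fun j => by
    have := (div_le_iff₀ (hy j)).1 (hi₀ j)
    simp only [Pi.add_apply, Pi.smul_apply, smul_eq_mul, Pi.zero_apply]
    linarith
  have hwi₀ : w i₀ = -(s * y i₀) := by simp only [s]; field_simp [(hy i₀).ne']
  have hNu := mulVec_nonneg_of_nonneg hN hu i₀
  rw [mulVec_add, mulVec_smul] at hNu
  have h1 := hw i₀
  have h2 := mul_le_mul_of_nonneg_left (hNy i₀) hs.le
  simp only [Pi.add_apply, Pi.smul_apply, smul_eq_mul, Pi.zero_apply, hwi₀] at hNu h1 h2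
  nlinarith [mul_pos (mul_pos hs (hy i₀)) (sub_pos.2 hlt)]

theorem exists_smul_sub_mulVec_eq (hN : ∀ i j, 0 ≤ N i j) {y : ι → ℝ} {l t : ℝ}
    (hy : ∀ i, 0 < y i) (hNy : N *ᵥ y ≤ l • y) (hlt : l < t) (c : ι → ℝ) :
    ∃ w, t • w - N *ᵥ w = c := by
  classical
  have hA : ∀ w, (t • (1 : Matrix ι ι ℝ) - N) *ᵥ w = t • w - N *ᵥ w := fun w => by
    rw [sub_mulVec, smul_mulVec, one_mulVec]
  have hinj : Function.Injective (t • (1 : Matrix ι ι ℝ) - N).mulVec := by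
    intro u v huv
    have h : N *ᵥ (u - v) = t • (u - v) := by
      rw [hA, hA] at huv
      rw [mulVec_sub, smul_sub]
      linear_combination -huv
    have h₁ := nonneg_of_mulVec_le hN hy hNy hlt h.le
    have h₂ := nonneg_of_mulVec_le hN hy hNy hlt (w := -(u - v)) (by rw [mulVec_neg, h, smul_neg])
    exact sub_eq_zero.1 (le_antisymm (neg_nonneg.1 h₂) h₁)
  obtain ⟨w, hw⟩ := mulVec_surjective_iff_isUnit.2 (mulVec_injective_iff_isUnit.1 hinj) c
  exact ⟨w, (hA w).symm.trans hw⟩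

theorem IsIndecomposable.pos_of_smul_sub_mulVec_eq (hirr : N.IsIndecomposable)
    (hN : ∀ i j, 0 ≤ N i j) {y : ι → ℝ} {l t : ℝ} (hy : ∀ i, 0 < y i) (hNy : N *ᵥ y ≤ l • y)
    (hlt : l < t) {c w : ι → ℝ} (hc : 0 ≤ c) (hc0 : c ≠ 0) (hw : t • w - N *ᵥ w = c) (i : ι) :
    0 < w i := by
  have hle : N *ᵥ w ≤ t • w := sub_nonneg.1 (hw ▸ hc)
  refine hirr.pos_of_mulVec_le hN (nonneg_of_mulVec_le hN hy hNy hlt hle) ?_ hle i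
  rintro rfl
  exact hc0 (by simpa using hw.symm)

/-- The resolvent `(μ + 1 - N)⁻¹` preserves positivity and turns the nonzero defect
`μ x - N x ≥ 0` into a strictly positive one, so `μ` can be lowered. -/
theorem IsIndecomposable.exists_lt_of_mulVec_le (hirr : N.IsIndecomposable)
    (hN : ∀ i j, 0 ≤ N i j) {x : ι → ℝ} {μ : ℝ} (hx : ∀ i, 0 < x i) (hle : N *ᵥ x ≤ μ • x)
    (hne : N *ᵥ x ≠ μ • x) : ∃ μ' < μ, ∃ x' : ι → ℝ, (∀ i, 0 < x' i) ∧ N *ᵥ x' ≤ μ' • x' := by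
  obtain ⟨i, -⟩ := Function.ne_iff.1 hne
  have : Nonempty ι := ⟨i⟩
  have hμ : μ < μ + 1 := lt_add_one μ
  obtain ⟨x', hx'⟩ := exists_smul_sub_mulVec_eq hN hx hle hμ x
  have hx'pos := hirr.pos_of_smul_sub_mulVec_eq hN hx hle hμ (fun j => (hx j).le)
    (fun h => (hx i).ne' (congrFun h i)) hx'
  set v := μ • x' - N *ᵥ x'
  have hv : (μ + 1) • v - N *ᵥ v = μ • x - N *ᵥ x := by
    rw [← hx']
    simp only [v, mulVec_sub, mulVec_smul]
    module
  have hvpos := hirr.pos_of_smul_sub_mulVec_eq hN hx hle hμ (fun j => sub_nonneg.2 (hle j))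
    (sub_ne_zero.2 hne.symm) hv
  obtain ⟨i₀, hi₀⟩ := Finite.exists_min fun i => v i / x' i
  refine ⟨μ - v i₀ / x' i₀, sub_lt_self μ (div_pos (hvpos i₀) (hx'pos i₀)), x', hx'pos, fun j => ?_⟩
  have h₁ := (le_div_iff₀ (hx'pos j)).1 (hi₀ j)
  have h₂ : v j = μ * x' j - (N *ᵥ x') j := rfl
  simp only [Pi.smul_apply, smul_eq_mul]
  nlinarith

/-- Perron's theorem, via minimizing `μ` subject to `N x ≤ μ x` over the standard simplex. -/
theorem IsIndecomposable.exists_pos_mulVec_eq [Nonempty ι] (hirr : N.IsIndecomposable)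
    (hN : ∀ i j, 0 ≤ N i j) : ∃ μ : ℝ, ∃ y : ι → ℝ, (∀ i, 0 < y i) ∧ N *ᵥ y = μ • y := by
  set B := ∑ i, ∑ j, N i j
  set T : Set (ℝ × (ι → ℝ)) :=
    Set.Icc 0 B ×ˢ stdSimplex ℝ ι ∩ {p | N *ᵥ p.2 ≤ p.1 • p.2}
  have hT : IsCompact T := (isCompact_Icc.prod (isCompact_stdSimplex ℝ ι)).inter_right <|
    isClosed_le (continuous_const.matrix_mulVec continuous_snd) (continuous_fst.smul continuous_snd)
  have hcard : (0 : ℝ) < Fintype.card ι := Nat.cast_pos.2 Fintype.card_pos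
  have hTne : T.Nonempty := by
    refine ⟨(B, fun _ => (Fintype.card ι : ℝ)⁻¹), ⟨⟨?_, le_rfl⟩, ?_, ?_⟩, fun i => ?_⟩
    · exact sum_nonneg fun i _ => sum_nonneg fun j _ => hN i j
    · exact fun _ => by positivity
    · simp [hcard.ne']
    · simp only [mulVec, dotProduct, Pi.smul_apply, smul_eq_mul, ← sum_mul]
      gcongr
      exact single_le_sum (f := fun i => ∑ j, N i j)
        (fun i _ => sum_nonneg fun j _ => hN i j) (mem_univ i)
  obtain ⟨⟨μ, x⟩, ⟨⟨hμ, hx⟩, hle⟩, hmin⟩ := hT.exists_isMinOn hTne continuous_fst.continuousOn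
  dsimp only [Set.mem_ofPred_eq] at hμ hx hle
  have hxpos := hirr.pos_of_mulVec_le hN hx.1
    (fun h => by have := hx.2; simp [h] at this) hle
  refine ⟨μ, x, hxpos, ?_⟩
  by_contra hne
  obtain ⟨μ', hμ', x', hx', hle'⟩ := hirr.exists_lt_of_mulVec_le hN hxpos hle hne
  set c := (∑ i, x' i)⁻¹
  have hc : 0 < c := inv_pos.2 (sum_pos (fun i _ => hx' i) univ_nonempty)
  have hmem : (μ', c • x') ∈ T := by
    refine ⟨⟨⟨nonneg_of_pos_of_mulVec_le hN hx' hle', hμ'.le.trans hμ.2⟩, ?_, ?_⟩, ?_⟩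
    · exact fun i => mul_nonneg hc.le (hx' i).le
    · simp [c, ← mul_sum, (sum_pos (fun i _ => hx' i) univ_nonempty).ne']
    · simpa [mulVec_smul, smul_comm μ' c] using smul_le_smul_of_nonneg_left hle' hc.le
  exact (hmin hmem).not_gt hμ'

/-- `‖ν‖ ‖v‖ ≤ N ‖v‖` coordinatewise, which the minimum principle forbids when `μ < ‖ν‖`. -/
theorem norm_le_of_mulVec_eq_smul (hN : ∀ i j, 0 ≤ N i j) {y : ι → ℝ} {μ : ℝ}
    (hy : ∀ i, 0 < y i) (hNy : N *ᵥ y = μ • y) {ν : ℂ} {v : ι → ℂ} (hv0 : v ≠ 0)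
    (hv : ∀ i, ∑ j, (N i j : ℂ) * v j = ν * v i) : ‖ν‖ ≤ μ := by
  by_contra! hlt
  have hle : N *ᵥ (-fun i => ‖v i‖) ≤ ‖ν‖ • -fun i => ‖v i‖ := fun i => by
    have : ‖ν‖ * ‖v i‖ ≤ ∑ j, N i j * ‖v j‖ := calc
      ‖ν‖ * ‖v i‖ = ‖∑ j, (N i j : ℂ) * v j‖ := by rw [hv, norm_mul]
      _ ≤ ∑ j, ‖(N i j : ℂ) * v j‖ := norm_sum_le _ _
      _ = ∑ j, N i j * ‖v j‖ := by simp [Complex.norm_real, abs_of_nonneg (hN _ _)]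
    simpa [mulVec_neg, mulVec, dotProduct] using this
  have h := nonneg_of_mulVec_le hN hy hNy.le hlt hle
  exact hv0 (funext fun i => norm_le_zero_iff.1 (by simpa using h i))

/-- With `t = min x / y`, `x - t y` is a nonnegative subsolution vanishing somewhere, hence
zero. -/
theorem IsIndecomposable.lt_of_mulVec_le_of_ne (hirr : N.IsIndecomposable)
    (hN : ∀ i j, 0 ≤ N i j) {y : ι → ℝ} {l : ℝ} (hy : ∀ i, 0 < y i) (hNy : N *ᵥ y = l • y)
    {x : ι → ℝ} {μ : ℝ} (hx : 0 ≤ x) (hle : N *ᵥ x ≤ μ • x) (hne : N *ᵥ x ≠ μ • x) : l < μ := by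
  by_contra! hμl
  obtain ⟨i, -⟩ := Function.ne_iff.1 hne
  have : Nonempty ι := ⟨i⟩
  obtain ⟨i₀, hi₀⟩ := Finite.exists_min fun i => x i / y i
  set t := x i₀ / y i₀
  have ht : 0 ≤ t := div_nonneg (hx i₀) (hy i₀).le
  have hz : 0 ≤ x - t • y := fun j => by
    have := (le_div_iff₀ (hy j)).1 (hi₀ j)
    simp only [Pi.sub_apply, Pi.smul_apply, smul_eq_mul, Pi.zero_apply]
    linarith
  have hzle : N *ᵥ (x - t • y) ≤ μ • (x - t • y) := fun j => by
    have h₁ := hle j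
    have h₂ := mul_le_mul_of_nonneg_left hμl (mul_nonneg ht (hy j).le)
    simp only [mulVec_sub, mulVec_smul, hNy, Pi.sub_apply, Pi.smul_apply, smul_eq_mul] at h₁ ⊢
    nlinarith
  have hxt : x = t • y := by
    by_contra h
    have := hirr.pos_of_mulVec_le hN hz (sub_ne_zero.2 h) hzle i₀
    simp [t, div_mul_cancel₀ _ (hy i₀).ne'] at this
  refine hne (funext fun j => (hle j).antisymm ?_)
  have hNx : N *ᵥ x = l • x := by rw [hxt, mulVec_smul, hNy, smul_comm]
  rw [hNx]
  exact mul_le_mul_of_nonneg_right hμl (hx j)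

lemma mulVec_dite_apply (N : Matrix ι ι ℝ) (J : Finset ι) [DecidablePred (· ∈ J)]
    (w : J → ℝ) (p : ι) :
    (N *ᵥ fun i => if h : i ∈ J then w ⟨i, h⟩ else 0) p = ∑ j : J, N p j * w j := by
  simp only [mulVec, dotProduct, mul_dite, mul_zero]
  exact (sum_attach_eq_sum_dite J fun j => N p j * w j).symm

theorem toSquareBlockProp_mulVec_eq_of_mulVec_eq {J : Finset ι}
    (hrow : ∀ p ∈ J, ∀ q ∉ J, N p q = 0) {x : ι → ℝ} {μ : ℝ} (hNx : N *ᵥ x = μ • x) :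
    N.toSquareBlockProp (· ∈ J) *ᵥ (fun j : J => x j) = μ • fun j : J => x j := by
  funext i
  rw [toSquareBlockProp_mem_mulVec_apply,
    sum_subset (subset_univ J) fun q _ hq => by rw [hrow i i.2 q hq, zero_mul]]
  exact congrFun hNx i

theorem IsIndecomposable.lt_of_mulVec_eq_of_ne_zero {J : Finset ι}
    (hirr : (N.toSquareBlockProp (· ∈ J)).IsIndecomposable) (hN : ∀ i j, 0 ≤ N i j)
    {y : J → ℝ} {l : ℝ} (hy : ∀ i, 0 < y i) (hNy : N.toSquareBlockProp (· ∈ J) *ᵥ y = l • y)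
    {x : ι → ℝ} {μ : ℝ} (hx : ∀ i, 0 < x i) (hNx : N *ᵥ x = μ • x)
    {p q : ι} (hp : p ∈ J) (hq : q ∉ J) (hpq : N p q ≠ 0) : l < μ := by
  have hterm : ∀ i j, 0 ≤ N i j * x j := fun i j => mul_nonneg (hN i j) (hx j).le
  have hle (i : J) : (N.toSquareBlockProp (· ∈ J) *ᵥ fun j : J => x j) i ≤ (N *ᵥ x) i := by
    rw [toSquareBlockProp_mem_mulVec_apply]
    exact sum_le_univ_sum_of_nonneg (hterm i)
  have hlt : (N.toSquareBlockProp (· ∈ J) *ᵥ fun j : J => x j) ⟨p, hp⟩ < (N *ᵥ x) p := by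
    rw [toSquareBlockProp_mem_mulVec_apply]
    exact sum_lt_sum_of_subset (subset_univ J) (mem_univ q) hq
      (mul_pos ((hN p q).lt_of_ne' hpq) (hx q)) fun j _ _ => hterm p j
  rw [hNx] at hle hlt
  exact hirr.lt_of_mulVec_le_of_ne (fun i j => hN i j) hy hNy (fun i => (hx i).le) hle
    fun h => hlt.ne (congrFun h ⟨p, hp⟩)

theorem exists_pos_block_solution_of_row_supported {J : Finset ι}
    (hrow : ∀ p ∈ J, ∀ q ∉ J, N p q = 0) {y : J → ℝ} {ρ : ℝ} (hy : ∀ i, 0 < y i)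
    (hNy : N.toSquareBlockProp (· ∈ J) *ᵥ y = ρ • y) {x : ι → ℝ} (hx : ∀ q ∈ J, x q = 0) :
    ∃ w : J → ℝ, (∀ i, 0 < w i) ∧
      ρ • w - N.toSquareBlockProp (· ∈ J) *ᵥ w = fun i : J => (N *ᵥ x) i := by
  refine ⟨y, hy, ?_⟩
  rw [hNy, sub_self]
  funext i
  refine (sum_eq_zero fun q _ => ?_).symm
  by_cases hq : q ∈ J
  exacts [mul_eq_zero_of_right _ (hx q hq), mul_eq_zero_of_left (hrow i i.2 q hq) _]

theorem IsIndecomposable.exists_pos_block_solution {J : Finset ι}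
    (hirr : (N.toSquareBlockProp (· ∈ J)).IsIndecomposable) (hN : ∀ i j, 0 ≤ N i j)
    {y : J → ℝ} {l ρ : ℝ} (hy : ∀ i, 0 < y i) (hNy : N.toSquareBlockProp (· ∈ J) *ᵥ y = l • y)
    (hlt : l < ρ) {x : ι → ℝ} (hx : 0 ≤ x) {p q : ι} (hp : p ∈ J) (hq : 0 < x q)
    (hpq : N p q ≠ 0) : ∃ w : J → ℝ, (∀ i, 0 < w i) ∧
      ρ • w - N.toSquareBlockProp (· ∈ J) *ᵥ w = fun i : J => (N *ᵥ x) i := by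
  have hNJ : ∀ i j, 0 ≤ N.toSquareBlockProp (· ∈ J) i j := fun i j => hN _ _
  have hc : 0 ≤ fun i : J => (N *ᵥ x) i := fun i => mulVec_nonneg_of_nonneg hN hx i
  have hc0 : (fun i : J => (N *ᵥ x) i) ≠ 0 := fun h =>
    ((mul_pos ((hN p q).lt_of_ne' hpq) hq).trans_le (mul_le_mulVec_apply hN hx p q)).ne'
      (congrFun h ⟨p, hp⟩)
  obtain ⟨w, hw⟩ := exists_smul_sub_mulVec_eq hNJ hy hNy.le hlt _
  exact ⟨w, hirr.pos_of_smul_sub_mulVec_eq hNJ hy hNy.le hlt hc hc0 hw, hw⟩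

def IsPosEigenvectorFrom {r : ℕ} (N : Matrix ι ι ℝ) (I : Fin r → Finset ι) (ρ : ℝ) (k : ℕ)
    (x : ι → ℝ) : Prop :=
  0 ≤ x ∧ ∀ a : Fin r, ∀ i ∈ I a,
    (k ≤ a → 0 < x i ∧ (N *ᵥ x) i = ρ * x i) ∧ (a < k → x i = 0)

theorem IsPosEigenvectorFrom.add_dite [DecidableEq ι] {r : ℕ} {I : Fin r → Finset ι}
    (hdisj : ∀ a b, a ≠ b → Disjoint (I a) (I b))
    (htri : ∀ a b : Fin r, b < a → ∀ p ∈ I a, ∀ q ∈ I b, N p q = 0) {ρ : ℝ} {a : Fin r}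
    {x : ι → ℝ} (hx : IsPosEigenvectorFrom N I ρ (a + 1) x) {w : I a → ℝ} (hw : ∀ i, 0 < w i)
    (hNw : ρ • w - N.toSquareBlockProp (· ∈ I a) *ᵥ w = fun i : I a => (N *ᵥ x) i) :
    IsPosEigenvectorFrom N I ρ a (x + fun i => if h : i ∈ I a then w ⟨i, h⟩ else 0) := by
  obtain ⟨hx0, hx⟩ := hx
  have hNxw : ∀ i, (N *ᵥ (x + fun i => if h : i ∈ I a then w ⟨i, h⟩ else 0)) i =
      (N *ᵥ x) i + ∑ j : I a, N i j * w j := fun i => by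
    rw [mulVec_add, Pi.add_apply, mulVec_dite_apply]
  refine ⟨add_nonneg hx0 fun i => ?_, fun b i hi => ?_⟩
  · split_ifs
    exacts [(hw _).le, le_rfl]
  rcases lt_trichotomy b a with hba | rfl | hab
  · have hia : i ∉ I a := disjoint_left.1 (hdisj b a hba.ne) hi
    refine ⟨fun h => absurd hba (by rw [Fin.lt_def]; omega), fun _ => ?_⟩
    simp [hia, (hx b i hi).2 (by rw [Fin.lt_def] at hba; omega)]
  · have hxi : x i = 0 := (hx b i hi).2 (by omega)
    refine ⟨fun _ => ⟨by simpa [hi, hxi] using hw ⟨i, hi⟩, ?_⟩, fun h => absurd h (by omega)⟩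
    have := congrFun hNw ⟨i, hi⟩
    simp only [Pi.sub_apply, Pi.smul_apply, smul_eq_mul] at this
    have hblock : ∑ j : I b, N i j * w j = (N.toSquareBlockProp (· ∈ I b) *ᵥ w) ⟨i, hi⟩ := rfl
    rw [hNxw, hblock, ← this]
    simp [hi, hxi]
  · have hia : i ∉ I a := disjoint_left.1 (hdisj b a hab.ne') hi
    have hab' : (a : ℕ) + 1 ≤ b := by rw [Fin.lt_def] at hab; omega
    refine ⟨fun _ => ?_, fun h => absurd h (by omega)⟩
    rw [hNxw, sum_eq_zero fun j _ => by rw [htri b a hab i hi j j.2, zero_mul]]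
    simpa [hia] using (hx b i hi).1 hab'

theorem exists_pos_mulVec_eq_of_blockTriangular [DecidableEq ι] {r : ℕ} {I : Fin r → Finset ι}
    (hdisj : ∀ a b, a ≠ b → Disjoint (I a) (I b)) (hcover : ∀ i, ∃ a, i ∈ I a)
    (htri : ∀ a b : Fin r, b < a → ∀ p ∈ I a, ∀ q ∈ I b, N p q = 0) {ρ : ℝ}
    (hsolve : ∀ a (x : ι → ℝ), 0 ≤ x → (∀ b, a < b → ∀ i ∈ I b, 0 < x i) →
      (∀ i ∈ I a, x i = 0) → ∃ w : I a → ℝ, (∀ i, 0 < w i) ∧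
        ρ • w - N.toSquareBlockProp (· ∈ I a) *ᵥ w = fun i : I a => (N *ᵥ x) i) :
    ∃ x : ι → ℝ, (∀ i, 0 < x i) ∧ N *ᵥ x = ρ • x := by
  have key : ∀ k ≤ r, ∃ x, IsPosEigenvectorFrom N I ρ k x := by
    intro k hk
    induction hk using Nat.decreasingInduction with
    | self => exact ⟨0, le_rfl, fun a _ _ => ⟨fun h => absurd a.2 (by omega), fun _ => rfl⟩⟩
    | of_succ k hk ih =>
      obtain ⟨x, hx⟩ := ih
      obtain ⟨w, hw, hNw⟩ := hsolve ⟨k, hk⟩ x hx.1 (fun b hab i hi => ((hx.2 b i hi).1 hab).1)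
        fun i hi => (hx.2 _ i hi).2 (by simp)
      exact ⟨_, hx.add_dite (a := ⟨k, hk⟩) hdisj htri hw hNw⟩
  obtain ⟨x, -, hx⟩ := key 0 (Nat.zero_le r)
  refine ⟨x, fun i => ?_, funext fun i => ?_⟩ <;> obtain ⟨a, hi⟩ := hcover i
  exacts [((hx a i hi).1 (Nat.zero_le _)).1, ((hx a i hi).1 (Nat.zero_le _)).2]

end Matrix

open Matrix

theorem MatIrredOn.isIndecomposable {n : ℕ} {M : Matrix (Fin n) (Fin n) ℝ} {J : Finset (Fin n)}
    (h : MatIrredOn (fun i j => M i j) J) : (M.toSquareBlockProp (· ∈ J)).IsIndecomposable := by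
  intro S hS hSJ
  obtain ⟨i, hi, j, hj, hij⟩ := h (S.map (Function.Embedding.subtype _))
    (fun i hi => by obtain ⟨i, -, rfl⟩ := mem_map.1 hi; exact i.2) (hS.map) fun hT =>
      hSJ (eq_univ_of_forall fun k => by simpa using hT.ge k.2)
  obtain ⟨i, hiS, rfl⟩ := mem_map.1 hi
  rw [mem_sdiff] at hj
  exact ⟨i, hiS, ⟨j, hj.1⟩, fun hjS => hj.2 (mem_map_of_mem _ hjS), hij⟩

theorem matSpecRadOn_eq_of_mulVec_eq {n : ℕ} {M : Matrix (Fin n) (Fin n) ℝ}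
    (hM : ∀ i j, 0 ≤ M i j) {J : Finset (Fin n)} (hJ : J.Nonempty) {y : J → ℝ} {μ : ℝ}
    (hy : ∀ i, 0 < y i) (hMy : M.toSquareBlockProp (· ∈ J) *ᵥ y = μ • y) :
    matSpecRadOn M J = μ := by
  have : Nonempty J := hJ.to_subtype
  have hMJ : ∀ i j, 0 ≤ M.toSquareBlockProp (· ∈ J) i j := fun i j => hM _ _
  have hμ : 0 ≤ μ := nonneg_of_pos_of_mulVec_le hMJ hy hMy.le
  set v : Fin n → ℝ := fun i => if h : i ∈ J then y ⟨i, h⟩ else 0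
  have hv : (fun j : J => v j) = y := funext fun j => dif_pos j.2
  refine IsGreatest.csSup_eq ⟨⟨μ, fun i => v i, ?_, fun i hi => ?_, by simp [abs_of_nonneg hμ]⟩, ?_⟩
  · obtain ⟨i, hi⟩ := hJ
    exact ⟨i, hi, by simpa [v, hi] using (hy ⟨i, hi⟩).ne'⟩
  · have := congrFun hMy ⟨i, hi⟩
    rw [← hv, toSquareBlockProp_mem_mulVec_apply] at this
    show ∑ j ∈ J, (M i j : ℂ) * (v j : ℂ) = μ * v i
    exact_mod_cast this
  · rintro _ ⟨ν, u, ⟨i, hi, hui⟩, hu, rfl⟩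
    exact norm_le_of_mulVec_eq_smul hMJ hy hMy (v := fun j : J => u j)
      (fun h => hui (congrFun h ⟨i, hi⟩))
      fun j => (sum_coe_sort J fun k => (M j k : ℂ) * u k).trans (hu j j.2)

theorem exists_pos_mulVec_eq_matSpecRadOn {n : ℕ} {M : Matrix (Fin n) (Fin n) ℝ}
    (hM : ∀ i j, 0 ≤ M i j) {J : Finset (Fin n)} (hirr : MatIrredOn (fun i j => M i j) J)
    (hJ : J.Nonempty) : ∃ y : J → ℝ, (∀ i, 0 < y i) ∧
      M.toSquareBlockProp (· ∈ J) *ᵥ y = matSpecRadOn M J • y := by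
  have : Nonempty J := hJ.to_subtype
  obtain ⟨μ, y, hy, hMy⟩ := hirr.isIndecomposable.exists_pos_mulVec_eq fun i j => hM _ _
  exact ⟨y, hy, by rwa [matSpecRadOn_eq_of_mulVec_eq hM hJ hy hMy]⟩

theorem matrix_positive_perron_iff_general {n : ℕ}
    (M : Matrix (Fin n) (Fin n) ℝ)
    (hM : ∀ i j, 0 ≤ M i j)
    (r s : ℕ) (I : Fin r → Finset (Fin n))
    (hdisj : ∀ a b, a ≠ b → Disjoint (I a) (I b))
    (hcover : ∀ i : Fin n, ∃ a, i ∈ I a)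
    (hblockne : ∀ a, (I a).Nonempty)
    (hirr : ∀ a, MatIrredOn (fun i j => M i j) (I a))
    (htri : ∀ a b : Fin r, b < a → ∀ p ∈ I a, ∀ q ∈ I b, M p q = 0)
    (hlink : ∀ a : Fin r, a.val < s →
      ∃ b : Fin r, a < b ∧ ∃ p ∈ I a, ∃ q ∈ I b, M p q ≠ 0)
    (hgenuine : ∀ a : Fin r, s ≤ a.val → ∀ p ∈ I a, ∀ q, q ∉ I a → M p q = 0) :
    (∃ x : Fin n → ℝ, (∀ i, 0 < x i) ∧ ∃ mu : ℝ, M.mulVec x = mu • x) ↔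
      ((∀ a : Fin r, a.val < s → matSpecRadOn M (I a) < matSpecRadOn M Finset.univ) ∧
       (∀ a : Fin r, s ≤ a.val → matSpecRadOn M (I a) = matSpecRadOn M Finset.univ)) := by
  choose y hy hMy using fun a => exists_pos_mulVec_eq_matSpecRadOn hM (hirr a) (hblockne a)
  constructor
  · rintro ⟨x, hx, μ, hMx⟩
    have hρ : ∀ a : Fin r, matSpecRadOn M univ = μ := fun a =>
      matSpecRadOn_eq_of_mulVec_eq hM ((hblockne a).mono (subset_univ _)) (fun i => hx i)
        (toSquareBlockProp_mulVec_eq_of_mulVec_eq (by simp) hMx)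
    refine ⟨fun a ha => ?_, fun a ha => ?_⟩ <;> rw [hρ a]
    · obtain ⟨b, hab, p, hp, q, hq, hpq⟩ := hlink a ha
      exact (hirr a).isIndecomposable.lt_of_mulVec_eq_of_ne_zero hM (hy a) (hMy a) hx hMx hp
        (disjoint_left.1 (hdisj b a hab.ne') hq) hpq
    · exact matSpecRadOn_eq_of_mulVec_eq hM (hblockne a) (fun i => hx i)
        (toSquareBlockProp_mulVec_eq_of_mulVec_eq (hgenuine a ha) hMx)
  · rintro ⟨hlt, heq⟩
    obtain ⟨x, hx, hMx⟩ := exists_pos_mulVec_eq_of_blockTriangular (ρ := matSpecRadOn M univ)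
      hdisj hcover htri fun a x hx0 hxpos hxa => by
        rcases lt_or_ge a.val s with ha | ha
        · obtain ⟨b, hab, p, hp, q, hq, hpq⟩ := hlink a ha
          exact (hirr a).isIndecomposable.exists_pos_block_solution hM (hy a) (hMy a) (hlt a ha)
            hx0 hp (hxpos b hab q hq) hpq
        · exact exists_pos_block_solution_of_row_supported (hgenuine a ha) (hy a)
            (heq a ha ▸ hMy a) hxa
    exact ⟨x, hx, _, hMx⟩

/-- a block upper triangular nonnegative matrix has a positive eigenvector iff it
is strongly nonnegative. -/
theorem matrix_positive_perron_iff {n : ℕ} (hn : 1 ≤ n)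
    (M : Matrix (Fin n) (Fin n) ℝ)
    (hM : ∀ i j, 0 ≤ M i j)
    (r s : ℕ) (hs : s ≤ r) (I : Fin r → Finset (Fin n))
    (hdisj : ∀ a b, a ≠ b → Disjoint (I a) (I b))
    (hcover : ∀ i : Fin n, ∃ a, i ∈ I a)
    (hblockne : ∀ a, (I a).Nonempty)
    (hirr : ∀ a, MatIrredOn (fun i j => M i j) (I a))
    (htri : ∀ a b : Fin r, b < a → ∀ p ∈ I a, ∀ q ∈ I b, M p q = 0)
    (hlink : ∀ a : Fin r, a.val < s →
      ∃ b : Fin r, a < b ∧ ∃ p ∈ I a, ∃ q ∈ I b, M p q ≠ 0)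
    (hgenuine : ∀ a : Fin r, s ≤ a.val → ∀ p ∈ I a, ∀ q, q ∉ I a → M p q = 0) :
    (∃ x : Fin n → ℝ, (∀ i, 0 < x i) ∧ ∃ mu : ℝ, M.mulVec x = mu • x) ↔
      ((∀ a : Fin r, a.val < s → matSpecRadOn M (I a) < matSpecRadOn M Finset.univ) ∧
       (∀ a : Fin r, s ≤ a.val → matSpecRadOn M (I a) = matSpecRadOn M Finset.univ)) :=
  matrix_positive_perron_iff_general M hM r s I hdisj hcover hblockne hirr htri hlink hgenuine

end
end

section
/- Let A be a nonnegative tensor of order m and dimension n written in a canonical nonnegative partition form with blocks I_1,…,I_s (non-genuine) and I_{s+1},…,I_r (genuine weakly irreducible). If A has a positive eigenvector, then ρ(A_{I_j}) = ρ(A) for all genuine blocks j ∈ {s+1,…,r} and ρ(A_{I_j}) < ρ(A) for all j ∈ [s]. -/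
open Finset

noncomputable section

/-! Both claims are Collatz–Wielandt comparisons. Let `x > 0` satisfy
`A_I x^{m-1} ≤ λ x^{[m-1]}` on `I` and let `(μ, y)` be an eigenpair of `A_I`. Scaling `x` by the
largest ratio `t = max_{i ∈ I} |y_i| / x_i` and looking at an index where it is attained gives
`|μ| ≤ λ`. If moreover `A_I` is weakly irreducible and the inequality is strict somewhere, then
`|μ| = λ` would make the contact set `{i | |y_i| = t x_i}` closed under the edges of the
majorization graph, hence equal to `I`, contradicting strictness. Normalized eigenpairs form a
compact set, so `ρ(A_I)` is attained and the strict bound passes to it.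

A positive eigenvector of `A` restricts on a genuine block to a positive eigenvector of the block,
while on a non-genuine block a positive term coupling it to a later block is lost, which gives the
strict inequality at one index. `ρ(A) = λ` is the case `I = univ`. -/

theorem eq_of_prod_eq_prod_of_le {ι R : Type*} [CommSemiring R] [LinearOrder R]
    [IsStrictOrderedRing R] {s : Finset ι} {f g : ι → R} (hf : ∀ i ∈ s, 0 ≤ f i)
    (hfg : ∀ i ∈ s, f i ≤ g i) (hg : ∀ i ∈ s, 0 < g i) (h : ∏ i ∈ s, f i = ∏ i ∈ s, g i) :
    ∀ i ∈ s, f i = g i := by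
  by_contra! hne
  obtain ⟨i, hi, hfgi⟩ := hne
  by_cases hfpos : ∀ j ∈ s, 0 < f j
  · exact h.not_lt (prod_lt_prod hfpos hfg ⟨i, hi, (hfg i hi).lt_of_ne hfgi⟩)
  · obtain ⟨j, hj, hfj⟩ : ∃ j ∈ s, f j ≤ 0 := by simpa using hfpos
    rw [prod_eq_zero hj (le_antisymm hfj (hf j hj))] at h
    exact (prod_pos hg).ne h

section BlockTensor

variable {n m' : ℕ} (A : Fin n → (Fin m' → Fin n) → ℝ) (I : Finset (Fin n))

/-- `(A_I x^{m-1})_i`. -/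
def blockApply (x : Fin n → ℝ) (i : Fin n) : ℝ :=
  ∑ idx ∈ univ.filter (fun idx : Fin m' → Fin n => ∀ k, idx k ∈ I), A i idx * ∏ k, x (idx k)

def blockApplyC (y : Fin n → ℂ) (i : Fin n) : ℂ :=
  ∑ idx ∈ univ.filter (fun idx : Fin m' → Fin n => ∀ k, idx k ∈ I),
    (A i idx : ℂ) * ∏ k, y (idx k)

def IsBlockEigenpair (μ : ℂ) (y : Fin n → ℂ) : Prop :=
  (∃ i ∈ I, y i ≠ 0) ∧ ∀ i ∈ I, blockApplyC A I y i = μ * y i ^ m'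

def blockSpectrumNorms : Set ℝ :=
  {r | ∃ μ y, IsBlockEigenpair A I μ y ∧ r = ‖μ‖}

theorem subSpecRad_eq_sSup : subSpecRad A I = sSup (blockSpectrumNorms A I) := by
  simp only [subSpecRad, blockSpectrumNorms, IsBlockEigenpair, blockApplyC, and_assoc]

theorem specRad_eq_subSpecRad_univ : specRad A = subSpecRad A univ := by
  simp only [specRad, subSpecRad, IsEig, tApplyC, Function.ne_iff, mem_univ, implies_true,
    forall_const, filter_true]
  congr 1
  ext r
  constructor
  · rintro ⟨μ, ⟨y, hy, hμ⟩, rfl⟩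
    exact ⟨μ, y, by simpa using hy, hμ, rfl⟩
  · rintro ⟨μ, y, hy, hμ, rfl⟩
    exact ⟨μ, ⟨y, by simpa using hy, hμ⟩, rfl⟩

variable {A I}

theorem blockApply_nonneg (hA : ∀ i idx, 0 ≤ A i idx) {x : Fin n → ℝ} (hx : ∀ i ∈ I, 0 ≤ x i)
    (i : Fin n) : 0 ≤ blockApply A I x i :=
  sum_nonneg fun idx hidx => mul_nonneg (hA i idx)
    (prod_nonneg fun k _ => hx _ ((mem_filter.mp hidx).2 k))

theorem blockApply_const_mul (c : ℝ) (x : Fin n → ℝ) (i : Fin n) :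
    blockApply A I (fun j => c * x j) i = c ^ m' * blockApply A I x i := by
  simp only [blockApply, prod_mul_distrib, prod_const, card_univ, Fintype.card_fin, mul_sum]
  exact sum_congr rfl fun _ _ => by ring

end BlockTensor

section CollatzWielandt

variable {n m' : ℕ} {A : Fin n → (Fin m' → Fin n) → ℝ} {I : Finset (Fin n)}

theorem mul_prod_le_mul_prod (hA : ∀ i idx, 0 ≤ A i idx) {u v : Fin n → ℝ}
    (hu : ∀ i ∈ I, 0 ≤ u i) (huv : ∀ i ∈ I, u i ≤ v i) (i : Fin n) {idx : Fin m' → Fin n}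
    (hidx : ∀ k, idx k ∈ I) : A i idx * ∏ k, u (idx k) ≤ A i idx * ∏ k, v (idx k) :=
  mul_le_mul_of_nonneg_left
    (prod_le_prod (fun k _ => hu _ (hidx k)) fun k _ => huv _ (hidx k)) (hA i idx)

theorem blockApply_mono (hA : ∀ i idx, 0 ≤ A i idx) {u v : Fin n → ℝ}
    (hu : ∀ i ∈ I, 0 ≤ u i) (huv : ∀ i ∈ I, u i ≤ v i) (i : Fin n) :
    blockApply A I u i ≤ blockApply A I v i :=
  sum_le_sum fun _ hidx => mul_prod_le_mul_prod hA hu huv i (mem_filter.mp hidx).2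

theorem eq_of_blockApply_eq (hA : ∀ i idx, 0 ≤ A i idx) {u v : Fin n → ℝ}
    (hu : ∀ i ∈ I, 0 ≤ u i) (huv : ∀ i ∈ I, u i ≤ v i) (hv : ∀ i ∈ I, 0 < v i) {i : Fin n}
    (h : blockApply A I u i = blockApply A I v i) {idx : Fin m' → Fin n}
    (hidx : ∀ k, idx k ∈ I) (hA0 : A i idx ≠ 0) (k : Fin m') : u (idx k) = v (idx k) := by
  have hterm := (sum_eq_sum_iff_of_le fun _ hidx' =>
    mul_prod_le_mul_prod hA hu huv i (mem_filter.mp hidx').2).mp h idx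
      (mem_filter.mpr ⟨mem_univ _, hidx⟩)
  exact eq_of_prod_eq_prod_of_le (fun k _ => hu _ (hidx k)) (fun k _ => huv _ (hidx k))
    (fun k _ => hv _ (hidx k)) (mul_left_cancel₀ hA0 hterm) k (mem_univ k)

theorem exists_max_ratio {z x : Fin n → ℝ} (hz0 : ∀ i ∈ I, 0 ≤ z i) (hz : ∃ i ∈ I, z i ≠ 0)
    (hx : ∀ i ∈ I, 0 < x i) :
    ∃ t > 0, (∀ i ∈ I, z i ≤ t * x i) ∧ ∃ i ∈ I, z i = t * x i := by
  obtain ⟨i₁, hi₁, hzi₁⟩ := hz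
  obtain ⟨i₀, hi₀, hmax⟩ := exists_max_image I (fun i => z i / x i) ⟨i₁, hi₁⟩
  refine ⟨z i₀ / x i₀, ?_, fun i hi => ?_, i₀, hi₀, (div_mul_cancel₀ _ (hx i₀ hi₀).ne').symm⟩
  · exact (div_pos ((hz0 i₁ hi₁).lt_of_ne' hzi₁) (hx i₁ hi₁)).trans_le (hmax i₁ hi₁)
  · exact (div_le_iff₀ (hx i hi)).mp (hmax i hi)

theorem collatzWielandt_le (hA : ∀ i idx, 0 ≤ A i idx) {z x : Fin n → ℝ} {μ lam : ℝ}
    (hz0 : ∀ i ∈ I, 0 ≤ z i) (hz : ∃ i ∈ I, z i ≠ 0) (hx : ∀ i ∈ I, 0 < x i)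
    (hzμ : ∀ i ∈ I, μ * z i ^ m' ≤ blockApply A I z i)
    (hxlam : ∀ i ∈ I, blockApply A I x i ≤ lam * x i ^ m') : μ ≤ lam := by
  obtain ⟨t, ht, hzt, i, hi, hzi⟩ := exists_max_ratio hz0 hz hx
  refine le_of_mul_le_mul_right ?_ (pow_pos (mul_pos ht (hx i hi)) m')
  calc μ * (t * x i) ^ m' = μ * z i ^ m' := by rw [hzi]
    _ ≤ blockApply A I z i := hzμ i hi
    _ ≤ blockApply A I (fun j => t * x j) i := blockApply_mono hA hz0 hzt i
    _ = t ^ m' * blockApply A I x i := blockApply_const_mul t x i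
    _ ≤ t ^ m' * (lam * x i ^ m') := mul_le_mul_of_nonneg_left (hxlam i hi) (by positivity)
    _ = lam * (t * x i) ^ m' := by ring

theorem collatzWielandt_lt (hA : ∀ i idx, 0 ≤ A i idx) (hirr : MatIrredOn (subMajor A I) I)
    {z x : Fin n → ℝ} {μ lam : ℝ} (hz0 : ∀ i ∈ I, 0 ≤ z i) (hz : ∃ i ∈ I, z i ≠ 0)
    (hx : ∀ i ∈ I, 0 < x i) (hzμ : ∀ i ∈ I, μ * z i ^ m' ≤ blockApply A I z i)
    (hxlam : ∀ i ∈ I, blockApply A I x i ≤ lam * x i ^ m')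
    (hstrict : ∃ p ∈ I, blockApply A I x p < lam * x p ^ m') : μ < lam := by
  classical
  obtain ⟨t, ht, hzt, i₀, hi₀, hzi₀⟩ := exists_max_ratio hz0 hz hx
  by_contra! hle
  have hcontact : ∀ i ∈ I, z i = t * x i →
      blockApply A I z i = blockApply A I (fun j => t * x j) i ∧
        blockApply A I x i = lam * x i ^ m' := by
    -- at a contact index every inequality in the proof of `collatzWielandt_le` is an equality
    intro i hi hzi
    have htpow : 0 < t ^ m' := pow_pos ht m'
    have hab := hzμ i hi
    have hbc := blockApply_mono hA hz0 hzt i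
    rw [blockApply_const_mul] at hbc ⊢
    have hcd : t ^ m' * blockApply A I x i ≤ t ^ m' * (lam * x i ^ m') := by
      gcongr; exact hxlam i hi
    have hda : t ^ m' * (lam * x i ^ m') ≤ μ * z i ^ m' := by
      rw [hzi, mul_pow, mul_left_comm]
      exact mul_le_mul_of_nonneg_right hle (by have := hx i hi; positivity)
    exact ⟨by linarith, mul_left_cancel₀ htpow.ne' (by linarith)⟩
  set S := I.filter fun i => z i = t * x i
  obtain ⟨p, hp, hpx⟩ := hstrict
  have hpS : p ∉ S := fun h => hpx.ne (hcontact p hp (mem_filter.mp h).2).2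
  obtain ⟨i, hiS, q, hq, hiq⟩ :=
    hirr S (filter_subset _ _) ⟨i₀, mem_filter.mpr ⟨hi₀, hzi₀⟩⟩ fun h => hpS (h ▸ hp)
  obtain ⟨hqI, hqS⟩ := mem_sdiff.mp hq
  obtain ⟨hiI, hzi⟩ := mem_filter.mp hiS
  obtain ⟨idx, hidx, hA0⟩ := exists_ne_zero_of_sum_ne_zero hiq
  obtain ⟨⟨k, rfl⟩, hidxI⟩ := (mem_filter.mp hidx).2
  exact hqS (mem_filter.mpr ⟨hqI, eq_of_blockApply_eq hA hz0 hzt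
    (fun j hj => mul_pos ht (hx j hj)) (hcontact i hiI hzi).1 hidxI hA0 k⟩)

end CollatzWielandt

section BlockSpectrum

variable {n m' : ℕ} {A : Fin n → (Fin m' → Fin n) → ℝ} {I : Finset (Fin n)}

theorem blockApplyC_ofReal (x : Fin n → ℝ) (i : Fin n) :
    blockApplyC A I (fun j => (x j : ℂ)) i = blockApply A I x i := by
  simp [blockApplyC, blockApply]

theorem blockApplyC_congr {y y' : Fin n → ℂ} (h : ∀ i ∈ I, y i = y' i) (i : Fin n) :
    blockApplyC A I y i = blockApplyC A I y' i :=
  sum_congr rfl fun idx hidx => by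
    simp only [fun k => h _ ((mem_filter.mp hidx).2 k)]

theorem blockApplyC_smul (c : ℂ) (y : Fin n → ℂ) (i : Fin n) :
    blockApplyC A I (c • y) i = c ^ m' * blockApplyC A I y i := by
  simp only [blockApplyC, Pi.smul_apply, smul_eq_mul, prod_mul_distrib, prod_const, card_univ,
    Fintype.card_fin, mul_sum]
  exact sum_congr rfl fun _ _ => by ring

theorem norm_mul_pow_le_blockApply_norm (hA : ∀ i idx, 0 ≤ A i idx) {μ : ℂ} {y : Fin n → ℂ}
    {i : Fin n} (h : blockApplyC A I y i = μ * y i ^ m') :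
    ‖μ‖ * ‖y i‖ ^ m' ≤ blockApply A I (fun j => ‖y j‖) i :=
  calc ‖μ‖ * ‖y i‖ ^ m' = ‖blockApplyC A I y i‖ := by rw [h, norm_mul, norm_pow]
    _ ≤ _ := norm_sum_le _ _
    _ = blockApply A I (fun j => ‖y j‖) i := sum_congr rfl fun idx _ => by
      rw [norm_mul, norm_prod, Complex.norm_real, Real.norm_of_nonneg (hA i idx)]

namespace IsBlockEigenpair

variable {μ : ℂ} {y : Fin n → ℂ}

theorem norm_le (hA : ∀ i idx, 0 ≤ A i idx) (h : IsBlockEigenpair A I μ y) {x : Fin n → ℝ}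
    {lam : ℝ} (hx : ∀ i ∈ I, 0 < x i) (hxlam : ∀ i ∈ I, blockApply A I x i ≤ lam * x i ^ m') :
    ‖μ‖ ≤ lam :=
  collatzWielandt_le hA (fun _ _ => norm_nonneg _) (by simpa using h.1) hx
    (fun _ hi => norm_mul_pow_le_blockApply_norm hA (h.2 _ hi)) hxlam

theorem norm_lt (hA : ∀ i idx, 0 ≤ A i idx) (hirr : MatIrredOn (subMajor A I) I)
    (h : IsBlockEigenpair A I μ y) {x : Fin n → ℝ} {lam : ℝ} (hx : ∀ i ∈ I, 0 < x i)
    (hxlam : ∀ i ∈ I, blockApply A I x i ≤ lam * x i ^ m')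
    (hstrict : ∃ p ∈ I, blockApply A I x p < lam * x p ^ m') : ‖μ‖ < lam :=
  collatzWielandt_lt hA hirr (fun _ _ => norm_nonneg _) (by simpa using h.1) hx
    (fun _ hi => norm_mul_pow_le_blockApply_norm hA (h.2 _ hi)) hxlam hstrict

theorem norm_le_sum (hA : ∀ i idx, 0 ≤ A i idx) (h : IsBlockEigenpair A I μ y) :
    ‖μ‖ ≤ ∑ j, blockApply A I (fun _ => 1) j :=
  h.norm_le hA (fun _ _ => one_pos) fun i _ => by
    simpa using single_le_sum (fun j _ => blockApply_nonneg hA (fun _ _ => zero_le_one) j)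
      (mem_univ i)

end IsBlockEigenpair

variable (A I) in
def normalizedBlockEigenpairs : Set (ℂ × (Fin n → ℂ)) :=
  {p | (∀ i ∈ I, blockApplyC A I p.2 i = p.1 * p.2 i ^ m') ∧ (∀ i ∉ I, p.2 i = 0) ∧ ‖p.2‖ = 1}

theorem isBlockEigenpair_of_mem_normalizedBlockEigenpairs {p : ℂ × (Fin n → ℂ)}
    (hp : p ∈ normalizedBlockEigenpairs A I) : IsBlockEigenpair A I p.1 p.2 := by
  obtain ⟨hμ, hy0, hy1⟩ := hp
  obtain ⟨i, hi⟩ := Function.ne_iff.mp (ne_zero_of_norm_ne_zero (hy1.trans_ne one_ne_zero))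
  exact ⟨⟨i, by_contra fun h => hi (hy0 i h), hi⟩, hμ⟩

theorem blockSpectrumNorms_eq_image :
    blockSpectrumNorms A I = (fun p => ‖p.1‖) '' normalizedBlockEigenpairs A I := by
  classical
  ext r
  constructor
  · rintro ⟨μ, y, ⟨⟨i, hi, hyi⟩, hμ⟩, rfl⟩
    set y' : Fin n → ℂ := fun j => if j ∈ I then y j else 0
    have hy'I : ∀ j ∈ I, y' j = y j := fun j hj => if_pos hj
    have hy' : y' ≠ 0 := fun h => hyi (by simpa [hy'I i hi] using congrFun h i)
    refine ⟨(μ, ((‖y'‖ : ℂ))⁻¹ • y'), ⟨fun j hj => ?_, fun j hj => by simp [y', hj],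
      norm_smul_inv_norm hy'⟩, rfl⟩
    simp only [blockApplyC_smul, blockApplyC_congr hy'I, hμ j hj, Pi.smul_apply, smul_eq_mul,
      hy'I j hj]
    ring
  · rintro ⟨p, hp, rfl⟩
    exact ⟨p.1, p.2, isBlockEigenpair_of_mem_normalizedBlockEigenpairs hp, rfl⟩

theorem isCompact_normalizedBlockEigenpairs (hA : ∀ i idx, 0 ≤ A i idx) :
    IsCompact (normalizedBlockEigenpairs A I) := by
  refine (isCompact_closedBall (0 : ℂ) (∑ j, blockApply A I (fun _ => 1) j)).prod
    (isCompact_closedBall 0 1) |>.of_isClosed_subset ?_ ?_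
  · have hcont : ∀ i, Continuous fun p : ℂ × (Fin n → ℂ) => blockApplyC A I p.2 i := by
      intro i; unfold blockApplyC; fun_prop
    simp only [normalizedBlockEigenpairs, Set.ofPred_and, Set.ofPred_forall]
    refine .inter (isClosed_iInter fun i => isClosed_iInter fun _ =>
      isClosed_eq (hcont i) (by fun_prop)) (.inter (isClosed_iInter fun i =>
      isClosed_iInter fun _ => isClosed_eq (by fun_prop) (by fun_prop)) ?_)
    exact isClosed_eq (by fun_prop) (by fun_prop)
  · intro p hp
    exact ⟨by simpa using (isBlockEigenpair_of_mem_normalizedBlockEigenpairs hp).norm_le_sum hA,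
      by simpa using hp.2.2.le⟩

theorem isCompact_blockSpectrumNorms (hA : ∀ i idx, 0 ≤ A i idx) :
    IsCompact (blockSpectrumNorms A I) := by
  rw [blockSpectrumNorms_eq_image]
  exact (isCompact_normalizedBlockEigenpairs hA).image (by fun_prop)

end BlockSpectrum

section SubSpecRad

variable {n m' : ℕ} {A : Fin n → (Fin m' → Fin n) → ℝ} {I : Finset (Fin n)}

theorem subSpecRad_eq_of_blockApply_eq (hA : ∀ i idx, 0 ≤ A i idx) (hI : I.Nonempty)
    {x : Fin n → ℝ} (hx : ∀ i ∈ I, 0 < x i) {lam : ℝ}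
    (heq : ∀ i ∈ I, blockApply A I x i = lam * x i ^ m') : subSpecRad A I = lam := by
  obtain ⟨i, hi⟩ := hI
  have hlam : 0 ≤ lam := nonneg_of_mul_nonneg_left
    (heq i hi ▸ blockApply_nonneg hA (fun j hj => (hx j hj).le) i) (pow_pos (hx i hi) m')
  rw [subSpecRad_eq_sSup]
  refine IsGreatest.csSup_eq ⟨⟨lam, fun j => x j,
    ⟨⟨i, hi, Complex.ofReal_ne_zero.mpr (hx i hi).ne'⟩, fun j hj => ?_⟩,
    by simp [abs_of_nonneg hlam]⟩, ?_⟩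
  · rw [blockApplyC_ofReal, heq j hj]
    push_cast
    rfl
  · rintro r ⟨μ, y, hy, rfl⟩
    exact hy.norm_le hA hx fun j hj => (heq j hj).le

theorem subSpecRad_lt_of_blockApply_le (hA : ∀ i idx, 0 ≤ A i idx)
    (hirr : MatIrredOn (subMajor A I) I) {x : Fin n → ℝ} (hx : ∀ i ∈ I, 0 < x i) {lam : ℝ}
    (hle : ∀ i ∈ I, blockApply A I x i ≤ lam * x i ^ m')
    (hstrict : ∃ p ∈ I, blockApply A I x p < lam * x p ^ m') : subSpecRad A I < lam := by
  rw [subSpecRad_eq_sSup]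
  rcases (blockSpectrumNorms A I).eq_empty_or_nonempty with hempty | hne
  · obtain ⟨p, hp, hpx⟩ := hstrict
    rw [hempty, Real.sSup_empty]
    exact pos_of_mul_pos_left ((blockApply_nonneg hA (fun j hj => (hx j hj).le) p).trans_lt hpx)
      (pow_pos (hx p hp) m').le
  · obtain ⟨μ, y, hy, hμ⟩ := (isCompact_blockSpectrumNorms hA).sSup_mem hne
    exact hμ ▸ hy.norm_lt hA hirr hx hle hstrict

end SubSpecRad

section FullTensor

variable {n m' : ℕ} {A : Fin n → (Fin m' → Fin n) → ℝ}

theorem blockApply_add_sum_not_mem (I : Finset (Fin n)) (x : Fin n → ℝ) (i : Fin n) :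
    blockApply A I x i + ∑ idx ∈ univ.filter (fun idx : Fin m' → Fin n => ¬∀ k, idx k ∈ I),
      A i idx * ∏ k, x (idx k) = tApply A x i :=
  sum_filter_add_sum_filter_not _ _ _

theorem blockApply_eq_tApply {I : Finset (Fin n)} {i : Fin n}
    (h : ∀ idx : Fin m' → Fin n, (∃ k, idx k ∉ I) → A i idx = 0) (x : Fin n → ℝ) :
    blockApply A I x i = tApply A x i := by
  rw [← blockApply_add_sum_not_mem I x i, sum_eq_zero, add_zero]
  intro idx hidx
  rw [h idx (by simpa using (mem_filter.mp hidx).2), zero_mul]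

theorem blockApply_le_tApply (hA : ∀ i idx, 0 ≤ A i idx) (I : Finset (Fin n)) {x : Fin n → ℝ}
    (hx : ∀ i, 0 ≤ x i) (i : Fin n) : blockApply A I x i ≤ tApply A x i := by
  rw [← blockApply_add_sum_not_mem I x i, le_add_iff_nonneg_right]
  exact sum_nonneg fun idx _ => mul_nonneg (hA i idx) (prod_nonneg fun k _ => hx _)

theorem blockApply_lt_tApply (hA : ∀ i idx, 0 ≤ A i idx) {I : Finset (Fin n)} {x : Fin n → ℝ}
    (hx : ∀ i, 0 < x i) {i : Fin n} {idx : Fin m' → Fin n} {k : Fin m'} (hk : idx k ∉ I)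
    (hpos : 0 < A i idx) : blockApply A I x i < tApply A x i := by
  rw [← blockApply_add_sum_not_mem I x i, lt_add_iff_pos_right]
  refine sum_pos' (fun idx _ => mul_nonneg (hA i idx) (prod_nonneg fun k _ => (hx _).le))
    ⟨idx, mem_filter.mpr ⟨mem_univ _, fun h => hk (h k)⟩, mul_pos hpos (prod_pos fun _ _ => hx _)⟩

end FullTensor

theorem positive_eigenvector_spectral_conditions_general {n m' : ℕ} (hn : 1 ≤ n)
    (A : Fin n → (Fin m' → Fin n) → ℝ)
    (hA : ∀ i idx, 0 ≤ A i idx)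
    (r s : ℕ) (I : Fin r → Finset (Fin n))
    (hdisj : ∀ j j', j ≠ j' → Disjoint (I j) (I j'))
    (hblockne : ∀ j, (I j).Nonempty)
    (hirr : ∀ j, WeaklyIrredOn A (I j))
    (hgenuine : ∀ j : Fin r, s ≤ j.val →
      ∀ p ∈ I j, ∀ idx : Fin m' → Fin n, (∃ k, idx k ∉ I j) → A p idx = 0)
    (hnongenuine : ∀ j : Fin r, j.val < s →
      ∃ p ∈ I j, ∃ idx : Fin m' → Fin n, (∃ k, ∃ l : Fin r, j < l ∧ idx k ∈ I l) ∧
        0 < A p idx)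
    (x : Fin n → ℝ) (hx : ∀ i, 0 < x i) (lam : ℝ)
    (heig : ∀ i, tApply A x i = lam * x i ^ m') :
    (∀ j : Fin r, s ≤ j.val → subSpecRad A (I j) = specRad A) ∧
      (∀ j : Fin r, j.val < s → subSpecRad A (I j) < specRad A) := by
  have hρ : specRad A = lam := by
    rw [specRad_eq_subSpecRad_univ]
    exact subSpecRad_eq_of_blockApply_eq hA ⟨⟨0, hn⟩, mem_univ _⟩ (fun i _ => hx i) fun i _ =>
      (blockApply_eq_tApply (fun _ ⟨_, hk⟩ => absurd (mem_univ _) hk) x).trans (heig i)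
  rw [hρ]
  refine ⟨fun j hj => ?_, fun j hj => ?_⟩
  · exact subSpecRad_eq_of_blockApply_eq hA (hblockne j) (fun i _ => hx i) fun i hi =>
      (blockApply_eq_tApply (hgenuine j hj i hi) x).trans (heig i)
  · obtain ⟨p, hp, idx, ⟨k, l, hjl, hkl⟩, hpos⟩ := hnongenuine j hj
    have hk : idx k ∉ I j := disjoint_left.mp (hdisj l j hjl.ne') hkl
    exact subSpecRad_lt_of_blockApply_le hA (hirr j) (fun i _ => hx i)
      (fun i _ => (blockApply_le_tApply hA (I j) (fun i => (hx i).le) i).trans_eq (heig i))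
      ⟨p, hp, (blockApply_lt_tApply hA hx hk hpos).trans_eq (heig p)⟩

/-- if a tensor in canonical nonnegative partition form has a positive
eigenvector, then the genuine blocks have spectral radius `ρ(A)` and the other blocks have
strictly smaller spectral radius. -/
theorem positive_eigenvector_spectral_conditions {n m' : ℕ} (hm : 1 ≤ m') (hn : 1 ≤ n)
    (A : Fin n → (Fin m' → Fin n) → ℝ)
    (hA : ∀ i idx, 0 ≤ A i idx)
    (r s : ℕ) (hs : s ≤ r) (I : Fin r → Finset (Fin n))
    (hdisj : ∀ j j', j ≠ j' → Disjoint (I j) (I j'))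
    (hcover : ∀ i : Fin n, ∃ j, i ∈ I j)
    (hblockne : ∀ j, (I j).Nonempty)
    (hirr : ∀ j, WeaklyIrredOn A (I j))
    (htri : ∀ j j' : Fin r, j' < j → ∀ p ∈ I j, ∀ idx : Fin m' → Fin n,
      (∀ k, ∃ l, l ≤ j ∧ idx k ∈ I l) → (∃ k, idx k ∈ I j') → A p idx = 0)
    (hgenuine : ∀ j : Fin r, s ≤ j.val →
      ∀ p ∈ I j, ∀ idx : Fin m' → Fin n, (∃ k, idx k ∉ I j) → A p idx = 0)
    (hnongenuine : ∀ j : Fin r, j.val < s →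
      ∃ p ∈ I j, ∃ idx : Fin m' → Fin n, (∃ k, ∃ l : Fin r, j < l ∧ idx k ∈ I l) ∧
        0 < A p idx)
    (x : Fin n → ℝ) (hx : ∀ i, 0 < x i) (lam : ℝ)
    (heig : ∀ i, tApply A x i = lam * x i ^ m') :
    (∀ j : Fin r, s ≤ j.val → subSpecRad A (I j) = specRad A) ∧
      (∀ j : Fin r, j.val < s → subSpecRad A (I j) < specRad A) :=
  positive_eigenvector_spectral_conditions_general hn A hA r s I hdisj hblockne hirr hgenuine
    hnongenuine x hx lam heig

end
end

section
/- Every nonnegative tensor A of order m and dimension n possesses, after a permutation of indices, at least one genuine weakly irreducible principal sub-tensor; that is, there exists a nonempty I ⊆ [n] such that A_I is weakly irreducible and a_{s i_2…i_m} = 0 for all s ∈ I whenever {i_2,…,i_m} ⊄ I. -/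
open Finset

noncomputable section

/-!
If a genuine block `A_I` is not weakly irreducible, some `∅ ≠ S ⊊ I` has no majorization edge
from `S` into `I \ S`; since `A` is nonnegative, this forces `a_{s i_2…i_m} = 0` for `s ∈ S`
whenever some `i_k ∈ I \ S`, so `A_S` is again genuine. Descending from `I = [n]` on `|I|` ends
at a weakly irreducible genuine block.
-/

def IsGenuineBlock {n m' : ℕ} (A : Fin n → (Fin m' → Fin n) → ℝ) (I : Finset (Fin n)) : Prop :=
  ∀ s ∈ I, ∀ idx : Fin m' → Fin n, (∃ k, idx k ∉ I) → A s idx = 0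

section

variable {n m' : ℕ} {A : Fin n → (Fin m' → Fin n) → ℝ}

lemma isGenuineBlock_univ : IsGenuineBlock A univ :=
  fun _ _ _ ⟨_, hk⟩ => absurd (mem_univ _) hk

lemma eq_zero_of_subMajor_eq_zero {I : Finset (Fin n)} {s j : Fin n} (hA : ∀ idx, 0 ≤ A s idx)
    (h : subMajor A I s j = 0) {idx : Fin m' → Fin n} (hj : ∃ k, idx k = j)
    (hI : ∀ k, idx k ∈ I) : A s idx = 0 :=
  (sum_eq_zero_iff_of_nonneg fun idx _ => hA idx).mp h idx (by simpa using ⟨hj, hI⟩)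

lemma IsGenuineBlock.of_not_weaklyIrredOn (hA : ∀ i idx, 0 ≤ A i idx) {I : Finset (Fin n)}
    (hI : IsGenuineBlock A I) (hirr : ¬ WeaklyIrredOn A I) :
    ∃ S ⊂ I, S.Nonempty ∧ IsGenuineBlock A S := by
  simp only [WeaklyIrredOn, MatIrredOn, not_forall, not_exists, not_and, not_not] at hirr
  obtain ⟨S, hSI, hSne, hSI', hS⟩ := hirr
  refine ⟨S, ssubset_of_subset_of_ne hSI hSI', hSne, fun s hs idx ⟨k, hk⟩ => ?_⟩
  by_cases hall : ∀ k', idx k' ∈ I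
  · exact eq_zero_of_subMajor_eq_zero (hA s) (hS s hs (idx k) (mem_sdiff.mpr ⟨hall k, hk⟩))
      ⟨k, rfl⟩ hall
  · push Not at hall
    exact hI s (hSI hs) idx hall

lemma IsGenuineBlock.exists_weaklyIrredOn_subset (hA : ∀ i idx, 0 ≤ A i idx)
    {I : Finset (Fin n)} (hne : I.Nonempty) (hI : IsGenuineBlock A I) :
    ∃ J ⊆ I, J.Nonempty ∧ WeaklyIrredOn A J ∧ IsGenuineBlock A J := by
  induction I using strongInduction with
  | H I ih =>
    by_cases hirr : WeaklyIrredOn A I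
    · exact ⟨I, subset_rfl, hne, hirr, hI⟩
    · obtain ⟨S, hSI, hSne, hS⟩ := hI.of_not_weaklyIrredOn hA hirr
      obtain ⟨J, hJS, hJ⟩ := ih S hSI hSne hS
      exact ⟨J, hJS.trans hSI.subset, hJ⟩

end

theorem exists_genuine_block_general {n m' : ℕ} (hn : 0 < n)
    (A : Fin n → (Fin m' → Fin n) → ℝ)
    (hA : ∀ i idx, 0 ≤ A i idx) :
    ∃ I : Finset (Fin n), I.Nonempty ∧ WeaklyIrredOn A I ∧
      ∀ s ∈ I, ∀ idx : Fin m' → Fin n, (∃ k, idx k ∉ I) → A s idx = 0 := by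
  obtain ⟨J, -, hJ⟩ := isGenuineBlock_univ.exists_weaklyIrredOn_subset hA
    (univ_nonempty_iff.mpr ⟨⟨0, hn⟩⟩)
  exact ⟨J, hJ⟩

/-- every nonnegative tensor has a genuine weakly irreducible principal
sub-tensor. -/
theorem exists_genuine_block {n m' : ℕ} (hm : 1 ≤ m') (hn : 0 < n)
    (A : Fin n → (Fin m' → Fin n) → ℝ)
    (hA : ∀ i idx, 0 ≤ A i idx) :
    ∃ I : Finset (Fin n), I.Nonempty ∧ WeaklyIrredOn A I ∧
      ∀ s ∈ I, ∀ idx : Fin m' → Fin n, (∃ k, idx k ∉ I) → A s idx = 0 :=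
  exists_genuine_block_general hn A hA

end
end
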